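/- arXiv:1008.1236 — 10 statements merged into one kernel-verified Lean document; each statement's English description precedes it below -/
import Mathlib

section
/- Let n ≥ 1 and let (n_1, c_1), …, (n_k, c_k) define a finite family of oriented hyperplanes in ℝ^n (each n_i a unit vector, c_i ∈ ℝ), and set v(P) = Σ_{i=1}^k (c_i − ⟪P, n_i⟫). If there exist n + 1 affinely independent points Q_0, …, Q_n in ℝ^n at which v takes the same value, then v is constant on ℝ^n (i.e., the family is Viviani). -/
/-! The sum of signed distances is an affine function of the point, and `n + 1` affinely
independent points affinely span `ℝ^n`; an affine map that is constant on a spanning set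
agrees there with a constant map, hence everywhere. -/

open scoped RealInnerProductSpace

theorem AffineMap.apply_eq_of_affineSpan_eq_top {k V₁ P₁ V₂ P₂ : Type*} [Ring k]
    [AddCommGroup V₁] [Module k V₁] [AddTorsor V₁ P₁]
    [AddCommGroup V₂] [Module k V₂] [AddTorsor V₂ P₂]
    {f : P₁ →ᵃ[k] P₂} {s : Set P₁} (hs : affineSpan k s = ⊤)
    (hf : ∀ x ∈ s, ∀ y ∈ s, f x = f y) (x y : P₁) : f x = f y := by
  obtain ⟨q, hq⟩ : s.Nonempty :=
    (affineSpan_nonempty (k := k)).mp ⟨x, hs ▸ AffineSubspace.mem_top k V₁ x⟩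
  have hconst : f = AffineMap.const k P₁ (f q) :=
    AffineMap.ext_on hs fun z hz => hf z hz q hq
  rw [hconst, AffineMap.const_apply, AffineMap.const_apply]

noncomputable def signedDistanceSum {E ι : Type*} [NormedAddCommGroup E]
    [InnerProductSpace ℝ E] [Fintype ι] (N : ι → E) (c : ι → ℝ) : E →ᵃ[ℝ] ℝ where
  toFun P := ∑ i, (c i - ⟪P, N i⟫)
  linear := -innerₛₗ ℝ (∑ i, N i)
  map_vadd' P v := by
    simp only [vadd_eq_add, inner_add_left, Finset.sum_sub_distrib, Finset.sum_add_distrib,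
      LinearMap.neg_apply, innerₛₗ_apply_apply, sum_inner, real_inner_comm]
    ring

theorem viviani_of_affineIndependent_points_general (n k : ℕ)
    (N : Fin k → EuclideanSpace ℝ (Fin n)) (c : Fin k → ℝ)
    (Q : Fin (n + 1) → EuclideanSpace ℝ (Fin n))
    (hQ : AffineIndependent ℝ Q)
    (hv : ∀ a b : Fin (n + 1),
      (∑ i, (c i - ⟪Q a, N i⟫)) = (∑ i, (c i - ⟪Q b, N i⟫))) :
    ∀ P P' : EuclideanSpace ℝ (Fin n),
      (∑ i, (c i - ⟪P, N i⟫)) = (∑ i, (c i - ⟪P', N i⟫)) := by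
  have hspan : affineSpan ℝ (Set.range Q) = ⊤ :=
    hQ.affineSpan_eq_top_iff_card_eq_finrank_add_one.mpr (by simp)
  exact (signedDistanceSum N c).apply_eq_of_affineSpan_eq_top hspan <| by
    rintro _ ⟨a, rfl⟩ _ ⟨b, rfl⟩
    exact hv a b

theorem viviani_of_affineIndependent_points (n k : ℕ) (hn : 1 ≤ n)
    (N : Fin k → EuclideanSpace ℝ (Fin n)) (c : Fin k → ℝ)
    (hN : ∀ i, ‖N i‖ = 1)
    (Q : Fin (n + 1) → EuclideanSpace ℝ (Fin n))
    (hQ : AffineIndependent ℝ Q)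
    (hv : ∀ a b : Fin (n + 1),
      (∑ i, (c i - ⟪Q a, N i⟫)) = (∑ i, (c i - ⟪Q b, N i⟫))) :
    ∀ P P' : EuclideanSpace ℝ (Fin n),
      (∑ i, (c i - ⟪P, N i⟫)) = (∑ i, (c i - ⟪P', N i⟫)) :=
  viviani_of_affineIndependent_points_general n k N c Q hQ hv
end

section
/- Let a, b, c be nonzero vectors in ℝ² with a + b + c = 0 (the edge vectors of a triangle, in cyclic order). Then a/‖a‖ + b/‖b‖ + c/‖c‖ = 0 if and only if ‖a‖ = ‖b‖ and ‖b‖ = ‖c‖. Consequently, a triangle is Viviani if and only if it is equilateral. -/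
/-! If unit vectors `u, v, w` sum to zero then `⟪u, v⟫ = -1/2`. Writing the edges as
`a = ‖a‖ u`, `b = ‖b‖ v`, `c = ‖c‖ w`, the relation `a + b + c = 0` minus `‖c‖ (u + v + w) = 0`
gives `(‖a‖ - ‖c‖) u + (‖b‖ - ‖c‖) v = 0`, and pairing with `u` and `v` yields a nonsingular
`2 × 2` linear system for the two differences. -/

open RealInnerProductSpace

section UnitVectors

variable {E : Type*} [NormedAddCommGroup E] [InnerProductSpace ℝ E] {u v w : E}

theorem inner_eq_neg_half_of_add_add_eq_zero (hu : ‖u‖ = 1) (hv : ‖v‖ = 1) (hw : ‖w‖ = 1)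
    (h : u + v + w = 0) : ⟪u, v⟫ = -1 / 2 := by
  have huv : ‖u + v‖ = 1 := by rw [eq_neg_of_add_eq_zero_left h, norm_neg, hw]
  have := norm_add_sq_real u v
  rw [huv, hu, hv] at this
  linarith

theorem eq_of_smul_add_smul_add_smul_eq_zero (hu : ‖u‖ = 1) (hv : ‖v‖ = 1) (hw : ‖w‖ = 1)
    (h : u + v + w = 0) {A B C : ℝ} (hABC : A • u + B • v + C • w = 0) : A = C ∧ B = C := by
  have huv : ⟪u, v⟫ = -1 / 2 := inner_eq_neg_half_of_add_add_eq_zero hu hv hw h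
  have hdiff : (A - C) • u + (B - C) • v = 0 := by
    linear_combination (norm := module) hABC - C • h
  have hpair_u := congrArg (⟪u, ·⟫) hdiff
  have hpair_v := congrArg (⟪v, ·⟫) hdiff
  simp only [inner_add_right, real_inner_smul_right, real_inner_self_eq_norm_sq, hu, hv,
    real_inner_comm u v, huv, inner_zero_right] at hpair_u hpair_v
  constructor <;> linarith

end UnitVectors

theorem viviani_triangle_iff_equilateral
    (a b c : EuclideanSpace ℝ (Fin 2))
    (ha : a ≠ 0) (hb : b ≠ 0) (hc : c ≠ 0)
    (hsum : a + b + c = 0) :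
    (‖a‖⁻¹ • a + ‖b‖⁻¹ • b + ‖c‖⁻¹ • c = 0) ↔ (‖a‖ = ‖b‖ ∧ ‖b‖ = ‖c‖) := by
  constructor
  · intro h
    have hsum_units : ‖a‖ • (‖a‖⁻¹ • a) + ‖b‖ • (‖b‖⁻¹ • b) + ‖c‖ • (‖c‖⁻¹ • c) = 0 := by
      rwa [smul_inv_smul₀ (norm_ne_zero_iff.mpr ha), smul_inv_smul₀ (norm_ne_zero_iff.mpr hb),
        smul_inv_smul₀ (norm_ne_zero_iff.mpr hc)]
    obtain ⟨hac, hbc⟩ := eq_of_smul_add_smul_add_smul_eq_zero (norm_smul_inv_norm ha)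
      (norm_smul_inv_norm hb) (norm_smul_inv_norm hc) h hsum_units
    exact ⟨hac.trans hbc.symm, hbc⟩
  · rintro ⟨hab, hbc⟩
    rw [← hab, ← hab.trans hbc, ← smul_add, ← smul_add, hsum, smul_zero]
end

section
/- Let a, b, c, d be nonzero vectors in ℝ² with a + b + c + d = 0, and suppose each consecutive pair in the cyclic order (a, b), (b, c), (c, d), (d, a) is linearly independent (the edge vectors of a strictly convex quadrilateral, in cyclic order). Then a/‖a‖ + b/‖b‖ + c/‖c‖ + d/‖d‖ = 0 if and only if c = −a and d = −b. Consequently, a convex quadrilateral is Viviani if and only if it is a parallelogram. -/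
/-!
Let `u, v, w, z` be the unit edge vectors. Since `u, v` are independent they span the plane, so
`w = α u + β v` and `z = -(1 + α) u - (1 + β) v`. With `p = ⟪u, v⟫ ≠ ±1`, the conditions
`‖w‖ = ‖z‖ = 1` are two quadrics in `(α, β)` whose difference factors as `(1 + α + β)(1 + p) = 0`,
and their only common solutions are `w = -u` and `w = -v`. The second makes `c` parallel to `b`.
The first makes `c` parallel to `a` and `d` parallel to `b`, and then `a + b + c + d = 0` forces
`c = -a` and `d = -b`.
-/

open RealInnerProductSpace Module

lemma eq_neg_one_and_eq_zero_or_of_quadrics {α β p : ℝ} (hp : p ≠ 1) (hp' : p ≠ -1)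
    (hw : α ^ 2 + 2 * α * β * p + β ^ 2 = 1)
    (hz : (1 + α) ^ 2 + 2 * (1 + α) * (1 + β) * p + (1 + β) ^ 2 = 1) :
    (α = -1 ∧ β = 0) ∨ (α = 0 ∧ β = -1) := by
  have hαβ : (1 + α + β) * (1 + p) = 0 := by linear_combination (hz - hw) / 2
  obtain rfl : β = -1 - α := by
    have := (mul_eq_zero.1 hαβ).resolve_right fun h => hp' (by linarith)
    linarith
  have hα : α * (1 + α) * (1 - p) = 0 := by linear_combination hw / 2
  rcases mul_eq_zero.1 ((mul_eq_zero.1 hα).resolve_right (sub_ne_zero.2 hp.symm)) with h | h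
  · exact Or.inr ⟨h, by linarith⟩
  · exact Or.inl ⟨by linarith, by linarith⟩

section InnerProductSpace

variable {E : Type*} [NormedAddCommGroup E] [InnerProductSpace ℝ E]

lemma norm_smul_add_smul_sq (α β : ℝ) (u v : E) :
    ‖α • u + β • v‖ ^ 2 = α ^ 2 * ‖u‖ ^ 2 + 2 * α * β * ⟪u, v⟫ + β ^ 2 * ‖v‖ ^ 2 := by
  rw [norm_add_sq_real, norm_smul, norm_smul, real_inner_smul_left, real_inner_smul_right,
    mul_pow, mul_pow, Real.norm_eq_abs, Real.norm_eq_abs, sq_abs, sq_abs]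
  ring

lemma real_inner_ne_one_of_linearIndependent {u v : E} (hu : ‖u‖ = 1) (hv : ‖v‖ = 1)
    (huv : LinearIndependent ℝ ![u, v]) : ⟪u, v⟫ ≠ 1 := by
  rw [Ne, inner_eq_one_iff_of_norm_eq_one hu hv]
  exact fun h => zero_ne_one (huv.injective (a₁ := 0) (a₂ := 1) h)

lemma real_inner_ne_neg_one_of_linearIndependent {u v : E} (hu : ‖u‖ = 1) (hv : ‖v‖ = 1)
    (huv : LinearIndependent ℝ ![u, v]) : ⟪u, v⟫ ≠ -1 := by
  rw [Ne, inner_eq_neg_one_iff_of_norm_eq_one hu hv]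
  intro h
  exact one_ne_zero (LinearIndependent.pair_iff.1 huv 1 1 (by rw [h]; module)).1

theorem eq_neg_and_eq_neg_of_add_add_add_eq_zero {u v w z : E} (hu : ‖u‖ = 1) (hv : ‖v‖ = 1)
    (hw : ‖w‖ = 1) (hz : ‖z‖ = 1) (huv : LinearIndependent ℝ ![u, v])
    (hw_mem : w ∈ Submodule.span ℝ {u, v}) (hsum : u + v + w + z = 0) :
    (w = -u ∧ z = -v) ∨ (w = -v ∧ z = -u) := by
  obtain ⟨α, β, rfl⟩ := Submodule.mem_span_pair.1 hw_mem
  have hz_eq : z = (-(1 + α)) • u + (-(1 + β)) • v := by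
    rw [eq_neg_of_add_eq_zero_right hsum]; module
  have hw_sq := norm_smul_add_smul_sq α β u v
  have hz_sq := norm_smul_add_smul_sq (-(1 + α)) (-(1 + β)) u v
  rw [hw, hu, hv] at hw_sq
  rw [← hz_eq, hz, hu, hv] at hz_sq
  rcases eq_neg_one_and_eq_zero_or_of_quadrics (α := α) (β := β)
    (real_inner_ne_one_of_linearIndependent hu hv huv)
    (real_inner_ne_neg_one_of_linearIndependent hu hv huv)
    (by linear_combination -hw_sq) (by linear_combination -hz_sq) with ⟨rfl, rfl⟩ | ⟨rfl, rfl⟩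
  · exact Or.inl ⟨by module, by rw [hz_eq]; module⟩
  · exact Or.inr ⟨by module, by rw [hz_eq]; module⟩

end InnerProductSpace

lemma LinearIndependent.mem_span_pair_of_finrank_eq_two {K V : Type*} [DivisionRing K]
    [AddCommGroup V] [Module K V] (hV : finrank K V = 2) {u v : V}
    (huv : LinearIndependent K ![u, v]) (w : V) : w ∈ Submodule.span K {u, v} := by
  rw [← Matrix.range_cons_cons_empty u v ![], huv.span_eq_top_of_card_eq_finrank (by simp [hV])]
  trivial

lemma eq_smul_of_inv_norm_smul_eq_neg {E : Type*} [NormedAddCommGroup E] [NormedSpace ℝ E]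
    {x y : E} (hx : x ≠ 0) (h : ‖x‖⁻¹ • x = -(‖y‖⁻¹ • y)) : x = (-(‖x‖ * ‖y‖⁻¹)) • y :=
  calc x = ‖x‖ • ‖x‖⁻¹ • x := (smul_inv_smul₀ (norm_ne_zero_iff.2 hx) x).symm
    _ = (-(‖x‖ * ‖y‖⁻¹)) • y := by rw [h]; module

lemma eq_neg_and_eq_neg_of_add_add_add_eq_zero_of_eq_smul {R M : Type*} [CommRing R]
    [AddCommGroup M] [Module R M] {a b c d : M} {r s : R} (hab : LinearIndependent R ![a, b])
    (hsum : a + b + c + d = 0) (hc : c = r • a) (hd : d = s • b) : c = -a ∧ d = -b := by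
  subst hc hd
  obtain ⟨hr, hs⟩ := LinearIndependent.pair_iff.1 hab (1 + r) (1 + s) (by rw [← hsum]; module)
  rw [eq_neg_of_add_eq_zero_right hr, eq_neg_of_add_eq_zero_right hs, neg_one_smul, neg_one_smul]
  exact ⟨rfl, rfl⟩

theorem viviani_quadrilateral_iff_parallelogram_general
    (a b c d : EuclideanSpace ℝ (Fin 2))
    (ha : a ≠ 0) (hb : b ≠ 0) (hc : c ≠ 0) (hd : d ≠ 0)
    (hab : LinearIndependent ℝ ![a, b]) (hbc : LinearIndependent ℝ ![b, c])
    (hsum : a + b + c + d = 0) :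
    (‖a‖⁻¹ • a + ‖b‖⁻¹ • b + ‖c‖⁻¹ • c + ‖d‖⁻¹ • d = 0) ↔ (c = -a ∧ d = -b) := by
  refine ⟨fun h => ?_, ?_⟩
  · have hunit_indep : LinearIndependent ℝ ![‖a‖⁻¹ • a, ‖b‖⁻¹ • b] :=
      (LinearIndependent.pair_smul_smul_iff (by simpa using ha) (by simpa using hb)).2 hab
    obtain ⟨hca, hdb⟩ | ⟨hcb, -⟩ := eq_neg_and_eq_neg_of_add_add_add_eq_zero
      (norm_smul_inv_norm ha) (norm_smul_inv_norm hb) (norm_smul_inv_norm hc)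
      (norm_smul_inv_norm hd) hunit_indep
      (hunit_indep.mem_span_pair_of_finrank_eq_two finrank_euclideanSpace_fin _) h
    · exact eq_neg_and_eq_neg_of_add_add_add_eq_zero_of_eq_smul hab hsum
        (eq_smul_of_inv_norm_smul_eq_neg hc hca) (eq_smul_of_inv_norm_smul_eq_neg hd hdb)
    · exact absurd (eq_smul_of_inv_norm_smul_eq_neg hc hcb).symm
        ((LinearIndependent.pair_iff' hb).1 hbc _)
  · rintro ⟨rfl, rfl⟩
    simp only [norm_neg, smul_neg]
    abel

theorem viviani_quadrilateral_iff_parallelogram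
    (a b c d : EuclideanSpace ℝ (Fin 2))
    (ha : a ≠ 0) (hb : b ≠ 0) (hc : c ≠ 0) (hd : d ≠ 0)
    (hab : LinearIndependent ℝ ![a, b]) (hbc : LinearIndependent ℝ ![b, c])
    (hcd : LinearIndependent ℝ ![c, d]) (hda : LinearIndependent ℝ ![d, a])
    (hsum : a + b + c + d = 0) :
    (‖a‖⁻¹ • a + ‖b‖⁻¹ • b + ‖c‖⁻¹ • c + ‖d‖⁻¹ • d = 0) ↔ (c = -a ∧ d = -b) :=
  viviani_quadrilateral_iff_parallelogram_general a b c d ha hb hc hd hab hbc hsum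
end

section
/- For every real t with 0 < t < π, the four vectors in ℝ³ given by n₁ = (cos(t/2), (sin t)/2, (1 − cos t)/2), n₂ = (−cos(t/2), (sin t)/2, (1 − cos t)/2), n₃ = (0, −sin t, cos t), n₄ = (0, 0, −1) are unit vectors and satisfy n₁ + n₂ + n₃ + n₄ = 0. Consequently, for any scalars c₁, c₂, c₃, c₄ ∈ ℝ, the function v(P) = Σ_{i=1}^4 (c_i − ⟪P, n_i⟫) is constant on ℝ³; i.e., any tetrahedron whose faces have these outward unit normals is Viviani. -/
open scoped RealInnerProductSpace
open Real

/-!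
The total signed distance from `P` is `∑ cᵢ - ⟪P, ∑ nᵢ⟫`, so it is constant as soon as the normals
sum to zero, which for the given vectors is a coordinatewise cancellation.
-/

theorem sum_sub_inner_eq_sum_of_sum_eq_zero {ι E : Type*} [Fintype ι]
    [NormedAddCommGroup E] [InnerProductSpace ℝ E] {N : ι → E} (hN : ∑ i, N i = 0)
    (c : ι → ℝ) (P : E) : ∑ i, (c i - ⟪P, N i⟫) = ∑ i, c i := by
  rw [Finset.sum_sub_distrib, ← inner_sum, hN, inner_zero_right, sub_zero]

theorem EuclideanSpace.norm_vec3 (x y z : ℝ) : ‖!₂[x, y, z]‖ = √(x ^ 2 + y ^ 2 + z ^ 2) := by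
  simp [EuclideanSpace.norm_eq, Fin.sum_univ_three]

theorem EuclideanSpace.norm_vec3_eq_one {x y z : ℝ} (h : x ^ 2 + y ^ 2 + z ^ 2 = 1) :
    ‖!₂[x, y, z]‖ = 1 := by
  rw [EuclideanSpace.norm_vec3, h, sqrt_one]

/-- The last two coordinates form a vector of squared length `sin² (t / 2) = (1 - cos t) / 2`. -/
theorem cos_half_sq_add_sin_div_two_sq_add_one_sub_cos_div_two_sq (t : ℝ) :
    cos (t / 2) ^ 2 + (sin t / 2) ^ 2 + ((1 - cos t) / 2) ^ 2 = 1 := by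
  have hcos : cos (t / 2) ^ 2 = 1 / 2 + cos t / 2 := by
    rw [cos_sq, show 2 * (t / 2) = t by ring]
  have hsin := sin_sq_add_cos_sq t
  rw [hcos]
  linear_combination hsin / 4

theorem irregular_viviani_tetrahedron_general (t : ℝ)
    (N : Fin 4 → EuclideanSpace ℝ (Fin 3))
    (h1 : N 0 = !₂[Real.cos (t / 2), Real.sin t / 2, (1 - Real.cos t) / 2])
    (h2 : N 1 = !₂[-Real.cos (t / 2), Real.sin t / 2, (1 - Real.cos t) / 2])
    (h3 : N 2 = !₂[0, -Real.sin t, Real.cos t])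
    (h4 : N 3 = !₂[0, 0, -1]) :
    (∀ i, ‖N i‖ = 1) ∧ (∑ i, N i) = 0 ∧
      ∀ (c : Fin 4 → ℝ) (P Q : EuclideanSpace ℝ (Fin 3)),
        (∑ i, (c i - ⟪P, N i⟫)) = (∑ i, (c i - ⟪Q, N i⟫)) := by
  have hunit := cos_half_sq_add_sin_div_two_sq_add_one_sub_cos_div_two_sq t
  have hsum : ∑ i, N i = 0 := by
    rw [Fin.sum_univ_four, h1, h2, h3, h4]
    ext i
    fin_cases i <;> simp
  refine ⟨fun i => ?_, hsum, fun c P Q => ?_⟩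
  · fin_cases i <;> dsimp only [Fin.reduceFinMk]
    · rw [h1]
      exact EuclideanSpace.norm_vec3_eq_one hunit
    · rw [h2]
      exact EuclideanSpace.norm_vec3_eq_one (by rwa [neg_sq])
    · rw [h3]
      exact EuclideanSpace.norm_vec3_eq_one (by simp)
    · rw [h4]
      exact EuclideanSpace.norm_vec3_eq_one (by norm_num)
  · rw [sum_sub_inner_eq_sum_of_sum_eq_zero hsum, sum_sub_inner_eq_sum_of_sum_eq_zero hsum]

theorem irregular_viviani_tetrahedron (t : ℝ) (ht0 : 0 < t) (htπ : t < π)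
    (N : Fin 4 → EuclideanSpace ℝ (Fin 3))
    (h1 : N 0 = !₂[Real.cos (t / 2), Real.sin t / 2, (1 - Real.cos t) / 2])
    (h2 : N 1 = !₂[-Real.cos (t / 2), Real.sin t / 2, (1 - Real.cos t) / 2])
    (h3 : N 2 = !₂[0, -Real.sin t, Real.cos t])
    (h4 : N 3 = !₂[0, 0, -1]) :
    (∀ i, ‖N i‖ = 1) ∧ (∑ i, N i) = 0 ∧
      ∀ (c : Fin 4 → ℝ) (P Q : EuclideanSpace ℝ (Fin 3)),
        (∑ i, (c i - ⟪P, N i⟫)) = (∑ i, (c i - ⟪Q, N i⟫)) :=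
  irregular_viviani_tetrahedron_general t N h1 h2 h3 h4
end

section
/- (Theorem 2(a)) Let P₁, …, P_k be points in ℝ^n, let P minimize Q ↦ Σ_{i=1}^k ‖Q − P_i‖ over ℝ^n, and suppose P ≠ P_i for all i. Set n_i = (P_i − P)/‖P_i − P‖ and choose any scalars c_i ∈ ℝ. Then the function v(Q) = Σ_{i=1}^k (c_i − ⟪Q, n_i⟫) is constant on ℝ^n; i.e., any family of oriented hyperplanes whose unit normals are the directions from the Fermat point to the given points is Viviani. -/
open scoped RealInnerProductSpace

/-!
At a Fermat point `P` different from all `Pᵢ`, the sum of distances is differentiable, and the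
gradient of `Q ↦ ‖Q - Pᵢ‖` at `P` is `-nᵢ`. Since `P` is a minimum, the gradient `-∑ nᵢ` vanishes,
so `v(Q) = ∑ cᵢ - ⟪Q, ∑ nᵢ⟫ = ∑ cᵢ` does not depend on `Q`.
-/

open Finset

variable {E : Type*} [NormedAddCommGroup E] [InnerProductSpace ℝ E]

theorem HasFDerivAt.norm {G : Type*} [NormedAddCommGroup G] [NormedSpace ℝ G]
    {f : G → E} {f' : G →L[ℝ] E} {x : G} (hf : HasFDerivAt f f' x) (h0 : f x ≠ 0) :
    HasFDerivAt (fun y => ‖f y‖) (‖f x‖⁻¹ • (innerSL ℝ (f x)).comp f') x := by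
  have hsq : ‖f x‖ ^ 2 ≠ 0 := by positivity
  convert hf.norm_sq.sqrt hsq using 1
  · simp only [Real.sqrt_sq (norm_nonneg _)]
  · rw [Real.sqrt_sq (norm_nonneg _), ← Nat.cast_smul_eq_nsmul ℝ, smul_smul]
    congr 1
    push_cast
    field_simp

theorem sum_inv_norm_smul_sub_eq_zero_of_isLocalMin {ι : Type*} [Fintype ι] {p : ι → E} {x : E}
    (hmin : IsLocalMin (fun y => ∑ i, ‖y - p i‖) x) (hne : ∀ i, x ≠ p i) :
    ∑ i, ‖p i - x‖⁻¹ • (p i - x) = 0 := by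
  have hderiv : HasFDerivAt (fun y => ∑ i, ‖y - p i‖)
      (∑ i, ‖x - p i‖⁻¹ • innerSL ℝ (x - p i)) x :=
    HasFDerivAt.fun_sum fun i _ => by
      simpa using ((hasFDerivAt_id x).sub_const (p i)).norm (sub_ne_zero.mpr (hne i))
  have hcrit := hmin.hasFDerivAt_eq_zero hderiv
  simp_rw [← map_smul, ← map_sum] at hcrit
  have hgrad := innerSL_inj.mp (hcrit.trans (map_zero _).symm)
  rw [← neg_eq_zero, ← sum_neg_distrib]
  convert hgrad using 2 with i
  rw [← neg_sub x, norm_neg, smul_neg, neg_neg]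

theorem viviani_of_fermat_point (n k : ℕ)
    (Pt : Fin k → EuclideanSpace ℝ (Fin n))
    (P : EuclideanSpace ℝ (Fin n))
    (hmin : ∀ Q : EuclideanSpace ℝ (Fin n),
      (∑ i, ‖P - Pt i‖) ≤ (∑ i, ‖Q - Pt i‖))
    (hne : ∀ i, P ≠ Pt i)
    (N : Fin k → EuclideanSpace ℝ (Fin n))
    (hN : ∀ i, N i = ‖Pt i - P‖⁻¹ • (Pt i - P))
    (c : Fin k → ℝ) :
    ∀ Q Q' : EuclideanSpace ℝ (Fin n),
      (∑ i, (c i - ⟪Q, N i⟫)) = (∑ i, (c i - ⟪Q', N i⟫)) := by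
  have hsum : ∑ i, N i = 0 := by
    simpa only [hN] using sum_inv_norm_smul_sub_eq_zero_of_isLocalMin (.of_forall hmin) hne
  have hconst : ∀ Q, ∑ i, (c i - ⟪Q, N i⟫) = ∑ i, c i := fun Q => by
    rw [sum_sub_distrib, ← inner_sum, hsum, inner_zero_right, sub_zero]
  intro Q Q'
  rw [hconst, hconst]
end

section
/- (Theorem 2(b)) Let (n_1, c_1), …, (n_k, c_k) define oriented hyperplanes in ℝ^n with n_1 + ⋯ + n_k = 0 (a Viviani family), let P ∈ ℝ^n be a point whose signed distances d_i = c_i − ⟪P, n_i⟫ satisfy d_i ≥ 0 for all i, and let P_i = P + d_i • n_i be the orthogonal projection of P onto the i-th hyperplane. Then for every Q ∈ ℝ^n, Σ_{i=1}^k ‖P − P_i‖ ≤ Σ_{i=1}^k ‖Q − P_i‖; that is, P is a Fermat point of P_1, …, P_k. -/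
open scoped RealInnerProductSpace

/-! Testing each distance `‖Q - Pᵢ‖` against the unit normal `nᵢ` gives
`‖Q - Pᵢ‖ ≥ ⟪Pᵢ - Q, nᵢ⟫`, and since the normals sum to zero the sum of the right-hand sides
does not depend on `Q`. At `Q = P` every `Pᵢ - P = dᵢ • nᵢ` with `dᵢ ≥ 0` points along `nᵢ`,
so all these inequalities are equalities. -/

open Finset

section
variable {E ι : Type*} [NormedAddCommGroup E] [InnerProductSpace ℝ E] [Fintype ι]

theorem sum_inner_sub_eq_of_sum_eq_zero {u : ι → E} (hsum : ∑ i, u i = 0) (X : ι → E) (Q : E) :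
    ∑ i, ⟪X i - Q, u i⟫ = ∑ i, ⟪X i, u i⟫ := by
  simp only [inner_sub_left, sum_sub_distrib, ← inner_sum, hsum, inner_zero_right, sub_zero]

theorem sum_inner_le_sum_norm_sub {u : ι → E} (hu : ∀ i, ‖u i‖ ≤ 1) (hsum : ∑ i, u i = 0)
    (X : ι → E) (Q : E) : ∑ i, ⟪X i, u i⟫ ≤ ∑ i, ‖Q - X i‖ :=
  calc ∑ i, ⟪X i, u i⟫ = ∑ i, ⟪X i - Q, u i⟫ := (sum_inner_sub_eq_of_sum_eq_zero hsum X Q).symm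
    _ ≤ ∑ i, ‖Q - X i‖ := sum_le_sum fun i _ =>
      calc ⟪X i - Q, u i⟫ ≤ ‖X i - Q‖ * ‖u i‖ := real_inner_le_norm _ _
        _ ≤ ‖Q - X i‖ := by
          rw [norm_sub_rev]
          exact mul_le_of_le_one_right (norm_nonneg _) (hu i)

theorem norm_smul_eq_inner_smul_self {u : E} (hu : ‖u‖ = 1) {t : ℝ} (ht : 0 ≤ t) :
    ‖t • u‖ = ⟪t • u, u⟫ := by
  rw [norm_smul, real_inner_smul_left, real_inner_self_eq_norm_sq, hu, Real.norm_of_nonneg ht]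
  ring

end

theorem fermat_point_of_viviani (n k : ℕ)
    (N : Fin k → EuclideanSpace ℝ (Fin n)) (c : Fin k → ℝ)
    (hN : ∀ i, ‖N i‖ = 1)
    (hsum : (∑ i, N i) = 0)
    (P : EuclideanSpace ℝ (Fin n))
    (hd : ∀ i, 0 ≤ c i - ⟪P, N i⟫)
    (Pt : Fin k → EuclideanSpace ℝ (Fin n))
    (hPt : ∀ i, Pt i = P + (c i - ⟪P, N i⟫) • N i) :
    ∀ Q : EuclideanSpace ℝ (Fin n),
      (∑ i, ‖P - Pt i‖) ≤ (∑ i, ‖Q - Pt i‖) := by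
  intro Q
  have hP : ∀ i, ‖P - Pt i‖ = ⟪Pt i - P, N i⟫ := fun i => by
    rw [norm_sub_rev, hPt i, add_sub_cancel_left]
    exact norm_smul_eq_inner_smul_self (hN i) (hd i)
  calc ∑ i, ‖P - Pt i‖ = ∑ i, ⟪Pt i - P, N i⟫ := sum_congr rfl fun i _ => hP i
    _ = ∑ i, ⟪Pt i, N i⟫ := sum_inner_sub_eq_of_sum_eq_zero hsum Pt P
    _ ≤ ∑ i, ‖Q - Pt i‖ := sum_inner_le_sum_norm_sub (fun i => (hN i).le) hsum Pt Q
end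

section
/- Let P₁, …, P_k be points in ℝ^n (k ≥ 3) that are not all collinear (i.e., they do not all lie on a common line). Then the function f(Q) = Σ_{i=1}^k ‖Q − P_i‖ attains its minimum over ℝ^n at exactly one point P, and this unique minimizer P lies in the convex hull of {P₁, …, P_k}. -/
/-!
A minimizer exists because `Q ↦ ∑ i, ‖Q - P i‖` is continuous and tends to infinity. It lies in
the convex hull because the nearest-point projection onto a closed convex set strictly decreases
the distance to every point of that set. It is unique because the sum is strictly convex: by strict
convexity of the norm, equality in `‖a • (x - P i) + b • (y - P i)‖ ≤ a ‖x - P i‖ + b ‖y - P i‖`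
for every `i` would force all the `P i` onto the line through `x ≠ y`.
-/

open Set

section Existence

variable {ι E : Type*} [Fintype ι] [Nonempty ι] [SeminormedAddCommGroup E] [ProperSpace E]

theorem exists_forall_sum_norm_sub_le (p : ι → E) :
    ∃ P, ∀ Q, ∑ i, ‖P - p i‖ ≤ ∑ i, ‖Q - p i‖ := by
  have hcont : Continuous fun Q : E => ∑ i, ‖Q - p i‖ := by fun_prop
  refine hcont.exists_forall_le ?_
  obtain ⟨i₀⟩ := ‹Nonempty ι›
  refine Filter.tendsto_atTop_mono (fun Q => ?_) (tendsto_dist_right_cocompact_atTop (p i₀))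
  rw [dist_eq_norm]
  exact Finset.single_le_sum (f := fun i => ‖Q - p i‖) (fun i _ => norm_nonneg _)
    (Finset.mem_univ i₀)

end Existence

section ConvexHull

variable {ι F : Type*} [NormedAddCommGroup F] [InnerProductSpace ℝ F]

theorem exists_forall_norm_sub_lt_of_notMem {K : Set F} (hne : K.Nonempty) (hK : IsComplete K)
    (hconv : Convex ℝ K) {x : F} (hx : x ∉ K) : ∃ v ∈ K, ∀ w ∈ K, ‖v - w‖ < ‖x - w‖ := by
  obtain ⟨v, hvK, hv⟩ := exists_norm_eq_iInf_of_complete_convex hne hK hconv x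
  have hobtuse := (norm_eq_iInf_iff_real_inner_le_zero hconv hvK).mp hv
  have hxv : 0 < ‖x - v‖ := norm_pos_iff.mpr (sub_ne_zero.mpr fun h => hx (h ▸ hvK))
  refine ⟨v, hvK, fun w hw => ?_⟩
  have hsq : ‖x - w‖ ^ 2 = ‖x - v‖ ^ 2 - 2 * inner ℝ (x - v) (w - v) + ‖v - w‖ ^ 2 := by
    rw [norm_sub_rev v w, ← norm_sub_sq_real, sub_sub_sub_cancel_right]
  have hinner := hobtuse w hw
  exact lt_of_pow_lt_pow_left₀ 2 (norm_nonneg _) (by nlinarith)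

theorem mem_convexHull_of_forall_sum_norm_sub_le [Fintype ι] [Nonempty ι] (p : ι → F) {P : F}
    (hP : ∀ Q, ∑ i, ‖P - p i‖ ≤ ∑ i, ‖Q - p i‖) : P ∈ convexHull ℝ (range p) := by
  by_contra hPC
  obtain ⟨v, -, hv⟩ := exists_forall_norm_sub_lt_of_notMem
    ((range_nonempty p).convexHull) (((finite_range p).isCompact_convexHull (𝕜 := ℝ)).isComplete)
    (convex_convexHull ℝ _) hPC
  have hlt : ∑ i, ‖v - p i‖ < ∑ i, ‖P - p i‖ :=
    Finset.sum_lt_sum_of_nonempty Finset.univ_nonempty fun i _ =>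
      hv _ (subset_convexHull ℝ _ (mem_range_self i))
  exact (hP v).not_gt hlt

end ConvexHull

section Uniqueness

theorem Collinear.of_subset_affineSpan_pair {k V P : Type*} [DivisionRing k] [AddCommGroup V]
    [Module k V] [AddTorsor V P] {s : Set P} {x y : P} (h : s ⊆ line[k, x, y]) :
    Collinear k s := by
  have hpair : Collinear k ({x, y} : Set P) := collinear_pair k x y
  rw [Collinear, ← direction_affineSpan] at hpair
  exact (Submodule.rank_mono (vectorSpan_mono k h)).trans hpair

theorem mem_affineSpan_pair_of_sameRay_vsub {R V P : Type*} [Field R] [LinearOrder R]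
    [IsStrictOrderedRing R] [AddCommGroup V] [Module R V] [AddTorsor V P] {x y q : P}
    (hxy : x ≠ y) (h : SameRay R (x -ᵥ q) (y -ᵥ q)) : q ∈ line[R, x, y] := by
  rcases wbtw_total_of_sameRay_vsub_left h with hw | hw
  · exact hw.collinear.mem_affineSpan_of_mem_of_ne (by simp) (by simp) (by simp) hxy
  · exact hw.collinear.mem_affineSpan_of_mem_of_ne (by simp) (by simp) (by simp) hxy

variable {ι E : Type*} [NormedAddCommGroup E] [NormedSpace ℝ E]

theorem exists_not_sameRay_sub_of_not_collinear {p : ι → E} (hp : ¬Collinear ℝ (range p))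
    {x y : E} (hxy : x ≠ y) : ∃ i, ¬SameRay ℝ (x - p i) (y - p i) := by
  by_contra! h
  refine hp (Collinear.of_subset_affineSpan_pair (x := x) (y := y) ?_)
  rintro _ ⟨i, rfl⟩
  exact mem_affineSpan_pair_of_sameRay_vsub hxy (h i)

theorem norm_smul_add_smul_lt_of_not_sameRay [StrictConvexSpace ℝ E] {u v : E} {a b : ℝ}
    (ha : 0 < a) (hb : 0 < b) (h : ¬SameRay ℝ u v) : ‖a • u + b • v‖ < a * ‖u‖ + b * ‖v‖ := by
  have hsmul : ¬SameRay ℝ (a • u) (b • v) := fun h' => h <| by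
    simpa [ha.ne', hb.ne'] using (h'.pos_smul_left (inv_pos.mpr ha)).pos_smul_right (inv_pos.mpr hb)
  calc ‖a • u + b • v‖ < ‖a • u‖ + ‖b • v‖ := norm_add_lt_of_not_sameRay hsmul
    _ = a * ‖u‖ + b * ‖v‖ := by rw [norm_smul_of_nonneg ha.le, norm_smul_of_nonneg hb.le]

theorem strictConvexOn_sum_norm_sub [Fintype ι] [StrictConvexSpace ℝ E] {p : ι → E}
    (hp : ¬Collinear ℝ (range p)) : StrictConvexOn ℝ univ fun x => ∑ i, ‖x - p i‖ := by
  refine ⟨convex_univ, fun x _ y _ hxy a b ha hb hab => ?_⟩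
  have hsplit : ∀ i, a • x + b • y - p i = a • (x - p i) + b • (y - p i) := fun i => by
    linear_combination (norm := module) hab • p i
  obtain ⟨j, hj⟩ := exists_not_sameRay_sub_of_not_collinear hp hxy
  simp only [smul_eq_mul, Finset.mul_sum, ← Finset.sum_add_distrib]
  refine Finset.sum_lt_sum (fun i _ => ?_) ⟨j, Finset.mem_univ j, ?_⟩
  · rw [hsplit, ← norm_smul_of_nonneg ha.le, ← norm_smul_of_nonneg hb.le]
    exact norm_add_le _ _
  · rw [hsplit]
    exact norm_smul_add_smul_lt_of_not_sameRay ha hb hj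

end Uniqueness

theorem fermat_point_exists_unique_general (n k : ℕ)
    (Pt : Fin k → EuclideanSpace ℝ (Fin n))
    (hcol : ¬ Collinear ℝ (Set.range Pt)) :
    ∃ P : EuclideanSpace ℝ (Fin n),
      (∀ Q : EuclideanSpace ℝ (Fin n), (∑ i, ‖P - Pt i‖) ≤ (∑ i, ‖Q - Pt i‖)) ∧
      P ∈ convexHull ℝ (Set.range Pt) ∧
      ∀ P' : EuclideanSpace ℝ (Fin n),
        (∀ Q : EuclideanSpace ℝ (Fin n), (∑ i, ‖P' - Pt i‖) ≤ (∑ i, ‖Q - Pt i‖)) → P' = P := by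
  have : Nonempty (Fin k) := range_nonempty_iff_nonempty.mp <|
    nonempty_iff_ne_empty.mpr fun h => hcol (h ▸ collinear_empty ..)
  obtain ⟨P, hP⟩ := exists_forall_sum_norm_sub_le Pt
  refine ⟨P, hP, mem_convexHull_of_forall_sum_norm_sub_le Pt hP, fun P' hP' => ?_⟩
  exact (strictConvexOn_sum_norm_sub hcol).eq_of_isMinOn (fun Q _ => hP' Q) (fun Q _ => hP Q)
    trivial trivial

theorem fermat_point_exists_unique (n k : ℕ) (hk : 3 ≤ k)
    (Pt : Fin k → EuclideanSpace ℝ (Fin n))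
    (hcol : ¬ Collinear ℝ (Set.range Pt)) :
    ∃ P : EuclideanSpace ℝ (Fin n),
      (∀ Q : EuclideanSpace ℝ (Fin n), (∑ i, ‖P - Pt i‖) ≤ (∑ i, ‖Q - Pt i‖)) ∧
      P ∈ convexHull ℝ (Set.range Pt) ∧
      ∀ P' : EuclideanSpace ℝ (Fin n),
        (∀ Q : EuclideanSpace ℝ (Fin n), (∑ i, ‖P' - Pt i‖) ≤ (∑ i, ‖Q - Pt i‖)) → P' = P :=
  fermat_point_exists_unique_general n k Pt hcol
end

section
/- (Viviani's inequality for outside points) Let (n_1, c_1), …, (n_k, c_k) define oriented hyperplanes in ℝ^n with n_1 + ⋯ + n_k = 0. Let P ∈ ℝ^n satisfy c_i − ⟪P, n_i⟫ ≥ 0 for all i, and let Q ∈ ℝ^n satisfy c_j − ⟪Q, n_j⟫ < 0 for some j. Then Σ_{i=1}^k |c_i − ⟪Q, n_i⟫| > Σ_{i=1}^k (c_i − ⟪P, n_i⟫); that is, the sum of the (unsigned) distances from the outside point Q to the hyperplanes strictly exceeds the constant sum of distances from inside points. -/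
/-!
Since `∑ i, N i = 0`, the sum of signed distances `∑ i, (c i - ⟪x, N i⟫)` equals `∑ i, c i` for
every point `x`. At `Q` this sum is bounded termwise by the sum of the absolute values, strictly at
the index `j` where the signed distance is negative.
-/

open scoped RealInnerProductSpace

theorem Finset.sum_lt_sum_abs_of_exists_neg {ι : Type*} {s : Finset ι} {f : ι → ℝ}
    (h : ∃ j ∈ s, f j < 0) : ∑ i ∈ s, f i < ∑ i ∈ s, |f i| := by
  obtain ⟨j, hjs, hj⟩ := h
  refine Finset.sum_lt_sum (fun i _ => le_abs_self _) ⟨j, hjs, ?_⟩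
  rw [abs_of_neg hj]
  linarith

theorem sum_sub_inner_eq_of_sum_eq_zero {E ι : Type*} [NormedAddCommGroup E]
    [InnerProductSpace ℝ E] {s : Finset ι} {N : ι → E} (hsum : ∑ i ∈ s, N i = 0)
    (c : ι → ℝ) (x : E) : ∑ i ∈ s, (c i - ⟪x, N i⟫) = ∑ i ∈ s, c i := by
  rw [Finset.sum_sub_distrib, ← inner_sum, hsum, inner_zero_right, sub_zero]

theorem viviani_outside_point_general (n k : ℕ)
    (N : Fin k → EuclideanSpace ℝ (Fin n)) (c : Fin k → ℝ)
    (hsum : (∑ i, N i) = 0)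
    (P Q : EuclideanSpace ℝ (Fin n))
    (hQ : ∃ j, c j - ⟪Q, N j⟫ < 0) :
    (∑ i, (c i - ⟪P, N i⟫)) < ∑ i, |c i - ⟪Q, N i⟫| := by
  rw [sum_sub_inner_eq_of_sum_eq_zero hsum c P, ← sum_sub_inner_eq_of_sum_eq_zero hsum c Q]
  obtain ⟨j, hj⟩ := hQ
  exact Finset.sum_lt_sum_abs_of_exists_neg ⟨j, Finset.mem_univ j, hj⟩

theorem viviani_outside_point (n k : ℕ)
    (N : Fin k → EuclideanSpace ℝ (Fin n)) (c : Fin k → ℝ)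
    (hN : ∀ i, ‖N i‖ = 1)
    (hsum : (∑ i, N i) = 0)
    (P Q : EuclideanSpace ℝ (Fin n))
    (hP : ∀ i, 0 ≤ c i - ⟪P, N i⟫)
    (hQ : ∃ j, c j - ⟪Q, N j⟫ < 0) :
    (∑ i, (c i - ⟪P, N i⟫)) < ∑ i, |c i - ⟪Q, N i⟫| :=
  viviani_outside_point_general n k N c hsum P Q hQ
end

section
/- (Viviani (b)) Let k ≥ 3, r > 0, A ∈ ℝ², and A_j = A + r • (cos(2πj/k), sin(2πj/k)) for j = 0, …, k−1, the vertices of a regular k-gon with center A and circumradius r. Then for every B ∈ ℝ² with B ≠ A, Σ_{j=0}^{k−1} ‖A − A_j‖ < Σ_{j=0}^{k−1} ‖B − A_j‖; equivalently, k·r < Σ_{j=0}^{k−1} ‖B − A_j‖. -/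
/-!
Pairing each vertex `A + r • u j` with its own unit direction `u j`, Cauchy–Schwarz gives
`‖B - (A + r • u j)‖ ≥ ⟪u j, A - B⟫ + r`. Since the directions of a regular polygon sum to zero,
the right-hand sides add up to `k * r` whatever `B` is. Equality in the `j`-th estimate forces
`B - A` to be a multiple of `u j`, which cannot happen for two independent directions unless
`B = A`.
-/

open Finset Real RealInnerProductSpace

section UnitVectors

variable {E : Type*} [NormedAddCommGroup E] [InnerProductSpace ℝ E] {u : E}

theorem inner_add_smul_sub_of_norm_eq_one (hu : ‖u‖ = 1) (A B : E) (r : ℝ) :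
    ⟪u, A + r • u - B⟫ = ⟪u, A - B⟫ + r := by
  rw [add_sub_right_comm, inner_add_right, real_inner_smul_right, real_inner_self_eq_norm_sq, hu]
  ring

theorem inner_sub_add_le_norm_sub_add_smul (hu : ‖u‖ = 1) (A B : E) (r : ℝ) :
    ⟪u, A - B⟫ + r ≤ ‖B - (A + r • u)‖ := by
  calc ⟪u, A - B⟫ + r = ⟪u, A + r • u - B⟫ := (inner_add_smul_sub_of_norm_eq_one hu A B r).symm
    _ ≤ ‖u‖ * ‖A + r • u - B‖ := real_inner_le_norm _ _
    _ = ‖B - (A + r • u)‖ := by rw [hu, one_mul, norm_sub_rev]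

theorem exists_sub_eq_smul_of_norm_sub_add_smul_le (hu : ‖u‖ = 1) {A B : E} {r : ℝ}
    (h : ‖B - (A + r • u)‖ ≤ ⟪u, A - B⟫ + r) : ∃ c : ℝ, B - A = c • u := by
  have hcauchy : ⟪u, A + r • u - B⟫ = ‖u‖ * ‖A + r • u - B‖ := by
    rw [inner_add_smul_sub_of_norm_eq_one hu, hu, one_mul, norm_sub_rev]
    exact le_antisymm (inner_sub_add_le_norm_sub_add_smul hu A B r) h
  have hparallel := inner_eq_norm_mul_iff_real.mp hcauchy
  rw [hu, one_smul] at hparallel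
  refine ⟨r - ‖A + r • u - B‖, ?_⟩
  rw [sub_smul, hparallel]
  abel

variable {ι : Type*} [Fintype ι] {u : ι → E}

theorem sum_inner_sub_add_eq_card_mul (hsum : ∑ i, u i = 0) (A B : E) (r : ℝ) :
    ∑ i, (⟪u i, A - B⟫ + r) = Fintype.card ι * r := by
  rw [sum_add_distrib, ← sum_inner, hsum, inner_zero_left, sum_const, card_univ, nsmul_eq_mul,
    zero_add]

theorem card_mul_lt_sum_norm_sub_add_smul (hu : ∀ i, ‖u i‖ = 1) (hsum : ∑ i, u i = 0)
    {i j : ι} (hind : LinearIndependent ℝ ![u i, u j]) {A B : E} (hB : B ≠ A) (r : ℝ) :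
    Fintype.card ι * r < ∑ l, ‖B - (A + r • u l)‖ := by
  rw [← sum_inner_sub_add_eq_card_mul hsum A B r]
  refine sum_lt_sum (fun l _ ↦ inner_sub_add_le_norm_sub_add_smul (hu l) A B r) ?_
  by_contra! hequal
  obtain ⟨a, ha⟩ := exists_sub_eq_smul_of_norm_sub_add_smul_le (hu i) (hequal i (mem_univ i))
  obtain ⟨b, hb⟩ := exists_sub_eq_smul_of_norm_sub_add_smul_le (hu j) (hequal j (mem_univ j))
  have ha0 : a = 0 := (LinearIndependent.pair_iff.mp hind a (-b) (by
    rw [neg_smul, ← ha, ← hb, add_neg_cancel])).1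
  exact hB (sub_eq_zero.mp (by rw [ha, ha0, zero_smul]))

end UnitVectors

theorem norm_cos_sin (θ : ℝ) : ‖!₂[cos θ, sin θ]‖ = 1 := by
  simp [EuclideanSpace.norm_eq, cos_sq_add_sin_sq]

theorem linearIndependent_cos_sin_pair {φ θ : ℝ} (h : sin (θ - φ) ≠ 0) :
    LinearIndependent ℝ ![!₂[cos φ, sin φ], !₂[cos θ, sin θ]] := by
  refine LinearIndependent.pair_iff.mpr fun s t hst ↦ ?_
  have h0 : s * cos φ + t * cos θ = 0 := by simpa using congrArg (· 0) hst
  have h1 : s * sin φ + t * sin θ = 0 := by simpa using congrArg (· 1) hst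
  rw [sin_sub] at h
  constructor
  · refine (mul_eq_zero.mp ?_).resolve_right h
    linear_combination sin θ * h0 - cos θ * h1
  · refine (mul_eq_zero.mp ?_).resolve_right h
    linear_combination cos φ * h1 - sin φ * h0

theorem sum_exp_two_pi_mul_I_div {k : ℕ} (hk : 1 < k) :
    ∑ j ∈ range k, Complex.exp (↑(2 * π * j / k) * Complex.I) = 0 := by
  have hk0 : k ≠ 0 := by omega
  have hpow (j : ℕ) : Complex.exp (↑(2 * π * j / k) * Complex.I)
      = Complex.exp (2 * π * Complex.I / k) ^ j := by
    rw [← Complex.exp_nat_mul]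
    push_cast
    ring_nf
  simp_rw [hpow]
  exact (Complex.isPrimitiveRoot_exp k hk0).geom_sum_eq_zero hk

theorem sum_cos_sin_two_pi_mul_div {k : ℕ} (hk : 1 < k) :
    ∑ j ∈ range k, !₂[cos (2 * π * j / k), sin (2 * π * j / k)] = 0 := by
  have hexp := sum_exp_two_pi_mul_I_div hk
  ext i
  fin_cases i
  · simpa [← Complex.exp_ofReal_mul_I_re] using congrArg Complex.re hexp
  · simpa [← Complex.exp_ofReal_mul_I_im] using congrArg Complex.im hexp

theorem regular_polygon_center_minimizes (k : ℕ) (hk : 3 ≤ k) (r : ℝ) (hr : 0 < r)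
    (A : EuclideanSpace ℝ (Fin 2))
    (N : Fin k → EuclideanSpace ℝ (Fin 2))
    (hN : ∀ j : Fin k,
      N j = ![Real.cos (2 * π * (j : ℝ) / k), Real.sin (2 * π * (j : ℝ) / k)])
    (V : Fin k → EuclideanSpace ℝ (Fin 2))
    (hV : ∀ j : Fin k, V j = A + r • N j) :
    ∀ B : EuclideanSpace ℝ (Fin 2), B ≠ A →
      (∑ j, ‖A - V j‖) < (∑ j, ‖B - V j‖) ∧ (k : ℝ) * r < ∑ j, ‖B - V j‖ := by
  intro B hB
  have hN' (j : Fin k) : N j = !₂[cos (2 * π * j / k), sin (2 * π * j / k)] :=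
    WithLp.ofLp_injective 2 (hN j)
  have hunit (j : Fin k) : ‖N j‖ = 1 := by rw [hN', norm_cos_sin]
  have hsum : ∑ j, N j = 0 := by
    simp_rw [hN']
    rw [Fin.sum_univ_eq_sum_range (fun j : ℕ ↦ !₂[cos (2 * π * j / k), sin (2 * π * j / k)])]
    exact sum_cos_sin_two_pi_mul_div (by omega)
  have hind : LinearIndependent ℝ ![N ⟨0, by omega⟩, N ⟨1, by omega⟩] := by
    have hk' : (2 : ℝ) < k := by exact_mod_cast hk
    rw [hN', hN']
    refine linearIndependent_cos_sin_pair (sin_pos_of_pos_of_lt_pi ?_ ?_).ne' <;>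
      simp only [Nat.cast_zero, Nat.cast_one, mul_zero, zero_div, sub_zero, mul_one]
    · positivity
    · rw [div_lt_iff₀ (by positivity)]
      nlinarith [pi_pos]
  have hcenter : ∑ j, ‖A - V j‖ = k * r := by
    simp [hV, norm_smul, hunit, abs_of_pos hr]
  have hlt := card_mul_lt_sum_norm_sub_add_smul hunit hsum hind hB r
  rw [Fintype.card_fin] at hlt
  simp_rw [hcenter, hV]
  exact ⟨hlt, hlt⟩
end

section
/- (Classical Viviani theorem) Let A, B, C be the vertices of an equilateral triangle in ℝ² with side length s > 0 (‖A − B‖ = ‖B − C‖ = ‖C − A‖ = s). Then for every point P in the convex hull of {A, B, C}, the sum of the distances from P to the three lines through B and C, through C and A, and through A and B equals (√3/2)·s, the altitude of the triangle. -/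
/-!
Write `P = a • A + b • B + c • C` with nonnegative weights summing to `1`, and let `M` be the
midpoint of `BC`. Since `A - M ⟂ C - B`, the foot of the perpendicular from `P` to `BC` is
`a • M + b • B + c • C`, so the distance from `P` to `BC` is `a` times the altitude `‖A - M‖`.
Summing over the three sides gives `(a + b + c)` times the altitude.
-/

open EuclideanGeometry RealInnerProductSpace

theorem exists_weights_of_mem_convexHull_triple {R E : Type*} [Field R] [LinearOrder R]
    [IsStrictOrderedRing R] [AddCommGroup E] [Module R E] {x y z p : E}
    (hp : p ∈ convexHull R ({x, y, z} : Set E)) :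
    ∃ a b c : R, 0 ≤ a ∧ 0 ≤ b ∧ 0 ≤ c ∧ a + b + c = 1 ∧ a • x + b • y + c • z = p := by
  rw [convexHull_insert (Set.insert_nonempty _ _), convexHull_pair, mem_convexJoin] at hp
  obtain ⟨_, rfl, q, ⟨u, v, hu, hv, huv, rfl⟩, a, b, ha, hb, hab, rfl⟩ := hp
  refine ⟨a, b * u, b * v, ha, mul_nonneg hb hu, mul_nonneg hb hv, ?_, ?_⟩
  · linear_combination b * huv + hab
  · simp only [smul_add, smul_smul, add_assoc]

section Torsor

variable {V P : Type*} [NormedAddCommGroup V] [InnerProductSpace ℝ V] [MetricSpace P]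
  [NormedAddTorsor V P]

theorem infDist_eq_dist_of_mem_of_vsub_mem_orthogonal {s : AffineSubspace ℝ P} {p q : P}
    (hq : q ∈ s) (hpq : p -ᵥ q ∈ s.directionᗮ) : Metric.infDist p s = dist p q := by
  refine le_antisymm (Metric.infDist_le_dist_of_mem hq) ((Metric.le_infDist ⟨q, hq⟩).2 ?_)
  intro x hx
  have hperp : ⟪p -ᵥ q, q -ᵥ x⟫ = 0 :=
    Submodule.inner_left_of_mem_orthogonal (AffineSubspace.vsub_mem_direction hq hx) hpq
  have hpyth := norm_add_sq_eq_norm_sq_add_norm_sq_real hperp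
  rw [vsub_add_vsub_cancel, ← dist_eq_norm_vsub, ← dist_eq_norm_vsub] at hpyth
  nlinarith [dist_nonneg (x := p) (y := q), dist_nonneg (x := p) (y := x)]

theorem dist_midpoint_eq_sqrt_three_div_two_mul_dist {x y z : P} (hxy : dist x y = dist y z)
    (hxz : dist x z = dist y z) :
    dist x (midpoint ℝ y z) = √3 / 2 * dist y z := by
  have h := dist_sq_add_dist_sq_eq_two_mul_dist_midpoint_sq_add_half_dist_sq x y z
  rw [hxy, hxz] at h
  have hsq : dist x (midpoint ℝ y z) ^ 2 = (√3 / 2 * dist y z) ^ 2 := by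
    rw [mul_pow, div_pow, Real.sq_sqrt zero_le_three]
    linarith
  exact (sq_eq_sq₀ dist_nonneg (by positivity)).1 hsq

end Torsor

section Module

variable {E : Type*} [NormedAddCommGroup E] [InnerProductSpace ℝ E]

theorem infDist_affineSpan_pair_of_dist_eq {x y z : E} (hxyz : dist x y = dist x z)
    {a b c : ℝ} (habc : a + b + c = 1) :
    Metric.infDist (a • x + b • y + c • z) (line[ℝ, y, z] : Set E) =
      |a| * dist x (midpoint ℝ y z) := by
  have hfoot : AffineMap.lineMap y z (a / 2 + c) ∈ line[ℝ, y, z] :=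
    AffineMap.lineMap_mem_affineSpan_pair _ _ _
  have hdiff : a • x + b • y + c • z - AffineMap.lineMap y z (a / 2 + c) =
      a • (x - midpoint ℝ y z) := by
    rw [AffineMap.lineMap_apply_module, midpoint_eq_smul_add, invOf_eq_inv,
      show b = 1 - a - c by linarith]
    module
  have hperp : ⟪y - z, x - midpoint ℝ y z⟫ = 0 := by
    rw [real_inner_comm]
    refine inner_vsub_vsub_of_dist_eq_of_dist_eq (p₁ := z) (p₂ := y) ?_
      (by rw [dist_comm z, dist_comm y, hxyz])
    simp only [dist_left_midpoint, dist_right_midpoint]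
  have horth : a • (x - midpoint ℝ y z) ∈ (line[ℝ, y, z]).directionᗮ := by
    rw [direction_affineSpan, vectorSpan_pair]
    exact Submodule.smul_mem _ _ (Submodule.mem_orthogonal_singleton_iff_inner_right.2 hperp)
  rw [infDist_eq_dist_of_mem_of_vsub_mem_orthogonal hfoot (by rwa [vsub_eq_sub, hdiff]),
    dist_eq_norm, hdiff, norm_smul, Real.norm_eq_abs, dist_eq_norm]

end Module

theorem viviani_classical_general (A B C : EuclideanSpace ℝ (Fin 2)) (s : ℝ)
    (hAB : ‖A - B‖ = s) (hBC : ‖B - C‖ = s) (hCA : ‖C - A‖ = s) :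
    ∀ P ∈ convexHull ℝ ({A, B, C} : Set (EuclideanSpace ℝ (Fin 2))),
      Metric.infDist P (affineSpan ℝ ({B, C} : Set (EuclideanSpace ℝ (Fin 2))) : Set (EuclideanSpace ℝ (Fin 2)))
        + Metric.infDist P (affineSpan ℝ ({C, A} : Set (EuclideanSpace ℝ (Fin 2))) : Set (EuclideanSpace ℝ (Fin 2)))
        + Metric.infDist P (affineSpan ℝ ({A, B} : Set (EuclideanSpace ℝ (Fin 2))) : Set (EuclideanSpace ℝ (Fin 2)))
        = Real.sqrt 3 / 2 * s := by
  intro P hP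
  obtain ⟨a, b, c, ha, hb, hc, habc, rfl⟩ := exists_weights_of_mem_convexHull_triple hP
  rw [← dist_eq_norm] at hAB hBC hCA
  have hAC : dist A C = s := by rw [dist_comm, hCA]
  have hBA : dist B A = s := by rw [dist_comm, hAB]
  have hCB : dist C B = s := by rw [dist_comm, hBC]
  rw [infDist_affineSpan_pair_of_dist_eq (hAB.trans hAC.symm) habc,
    show a • A + b • B + c • C = b • B + c • C + a • A by abel,
    infDist_affineSpan_pair_of_dist_eq (hBC.trans hBA.symm) (by linarith : b + c + a = 1),
    show b • B + c • C + a • A = c • C + a • A + b • B by abel,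
    infDist_affineSpan_pair_of_dist_eq (hCA.trans hCB.symm) (by linarith : c + a + b = 1),
    dist_midpoint_eq_sqrt_three_div_two_mul_dist (hAB.trans hBC.symm) (hAC.trans hBC.symm),
    dist_midpoint_eq_sqrt_three_div_two_mul_dist (hBC.trans hCA.symm) (hBA.trans hCA.symm),
    dist_midpoint_eq_sqrt_three_div_two_mul_dist (hCA.trans hAB.symm) (hCB.trans hAB.symm),
    abs_of_nonneg ha, abs_of_nonneg hb, abs_of_nonneg hc, hAB, hBC, hCA]
  linear_combination (√3 / 2 * s) * habc

theorem viviani_classical (A B C : EuclideanSpace ℝ (Fin 2)) (s : ℝ) (hs : 0 < s)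
    (hAB : ‖A - B‖ = s) (hBC : ‖B - C‖ = s) (hCA : ‖C - A‖ = s) :
    ∀ P ∈ convexHull ℝ ({A, B, C} : Set (EuclideanSpace ℝ (Fin 2))),
      Metric.infDist P (affineSpan ℝ ({B, C} : Set (EuclideanSpace ℝ (Fin 2))) : Set (EuclideanSpace ℝ (Fin 2)))
        + Metric.infDist P (affineSpan ℝ ({C, A} : Set (EuclideanSpace ℝ (Fin 2))) : Set (EuclideanSpace ℝ (Fin 2)))
        + Metric.infDist P (affineSpan ℝ ({A, B} : Set (EuclideanSpace ℝ (Fin 2))) : Set (EuclideanSpace ℝ (Fin 2)))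
        = Real.sqrt 3 / 2 * s :=
  viviani_classical_general A B C s hAB hBC hCA
end
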